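/- Let γ = (γ₁,γ₂,γ₃) : [a,b] → ℝ³ be a Euclidean C²-smooth regular curve and t ∈ [a,b] a point with ω(γ̇(t)) = 0 and (d/dt)ω(γ̇(t)) = 0. Then for every L > 0 the curvature k^{L,∇}_γ(t) associated to the first Schouten–Van Kampen affine connection equals |γ̈₁(t)γ̇₂(t) − γ̈₂(t)γ̇₁(t)| / (γ̇₁(t)² + γ̇₂(t)²)^{3/2}; in particular its limit as L → +∞ is this value. -/

import Mathlib

open Filter Real Topology

/-- The first Schouten–Van Kampen curvature at a point, in terms of `γ̇₁, γ̇₂, γ̈₁, γ̈₂`,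
`ω(γ̇)` and `(d/dt) ω(γ̇)` there. -/
noncomputable def svkCurvature (L d₁ d₂ c₁ c₂ w w' : ℝ) : ℝ :=
  √(((c₁ + L * w * d₂ / 2) ^ 2 + (c₂ - L * w * d₁ / 2) ^ 2 + L * w' ^ 2) /
        (d₁ ^ 2 + d₂ ^ 2 + L * w ^ 2) ^ 2 -
      (d₁ * (c₁ + L * w * d₂ / 2) + d₂ * (c₂ - L * w * d₁ / 2) + L * w * w') ^ 2 /
        (d₁ ^ 2 + d₂ ^ 2 + L * w ^ 2) ^ 3)

lemma sq_add_sq_pos_of_not_all_zero {x y z p q c : ℝ} (hxyz : ¬ (x = 0 ∧ y = 0 ∧ z = 0))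
    (hz : z + c * (p * x - q * y) = 0) : 0 < x ^ 2 + y ^ 2 := by
  by_contra! hle
  have hx : x = 0 := by nlinarith [sq_nonneg x, sq_nonneg y]
  have hy : y = 0 := by nlinarith [sq_nonneg x, sq_nonneg y]
  exact hxyz ⟨hx, hy, by simpa [hx, hy] using hz⟩

lemma rpow_three_halves_sq {N : ℝ} (hN : 0 ≤ N) : (N ^ ((3 : ℝ) / 2)) ^ 2 = N ^ 3 := by
  rw [rpow_div_two_eq_sqrt _ hN, rpow_ofNat, ← pow_mul, mul_comm, pow_mul, sq_sqrt hN]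

/-- With `ω = ω' = 0` the connection terms drop out and what remains is the planar curvature:
by Lagrange's identity `(c₁² + c₂²)(d₁² + d₂²) - (d₁c₁ + d₂c₂)² = (c₁d₂ - c₂d₁)²`. -/
theorem svkCurvature_horizontal (L : ℝ) {d₁ d₂ c₁ c₂ : ℝ} (hN : 0 < d₁ ^ 2 + d₂ ^ 2) :
    svkCurvature L d₁ d₂ c₁ c₂ 0 0 =
      |c₁ * d₂ - c₂ * d₁| / (d₁ ^ 2 + d₂ ^ 2) ^ ((3 : ℝ) / 2) := by
  have hradicand : (c₁ ^ 2 + c₂ ^ 2) / (d₁ ^ 2 + d₂ ^ 2) ^ 2 -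
      (d₁ * c₁ + d₂ * c₂) ^ 2 / (d₁ ^ 2 + d₂ ^ 2) ^ 3 =
      (|c₁ * d₂ - c₂ * d₁| / (d₁ ^ 2 + d₂ ^ 2) ^ ((3 : ℝ) / 2)) ^ 2 := by
    rw [div_pow, sq_abs, rpow_three_halves_sq hN.le]
    field_simp
    ring
  simp only [svkCurvature, mul_zero, zero_mul, zero_div, add_zero, sub_zero,
    zero_pow two_ne_zero, hradicand]
  exact sqrt_sq (by positivity)

theorem curvature_first_SvK_horizontal
    (γ₁ γ₂ γ₃ ω : ℝ → ℝ) (k : ℝ → ℝ → ℝ) (a b t : ℝ)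
    (ht : t ∈ Set.Icc a b)
    (hreg : ∀ s ∈ Set.Icc a b, ¬ (deriv γ₁ s = 0 ∧ deriv γ₂ s = 0 ∧ deriv γ₃ s = 0))
    (hω : ∀ s, ω s = deriv γ₃ s + (1/2) * (γ₂ s * deriv γ₁ s - γ₁ s * deriv γ₂ s))
    (hk : ∀ L s, k L s = Real.sqrt (((deriv (deriv γ₁) s + L * ω s * deriv γ₂ s / 2)^2 + (deriv (deriv γ₂) s - L * ω s * deriv γ₁ s / 2)^2 + L * (deriv ω s)^2) / ((deriv γ₁ s)^2 + (deriv γ₂ s)^2 + L * (ω s)^2)^2 - (deriv γ₁ s * (deriv (deriv γ₁) s + L * ω s * deriv γ₂ s / 2) + deriv γ₂ s * (deriv (deriv γ₂) s - L * ω s * deriv γ₁ s / 2) + L * ω s * deriv ω s)^2 / ((deriv γ₁ s)^2 + (deriv γ₂ s)^2 + L * (ω s)^2)^3))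
    (h0 : ω t = 0) (h1 : deriv ω t = 0) :
    (∀ L > (0:ℝ), k L t = |deriv (deriv γ₁) t * deriv γ₂ t - deriv (deriv γ₂) t * deriv γ₁ t| / ((deriv γ₁ t)^2 + (deriv γ₂ t)^2) ^ ((3:ℝ)/2)) ∧
    Filter.Tendsto (fun L => k L t) Filter.atTop (nhds (|deriv (deriv γ₁) t * deriv γ₂ t - deriv (deriv γ₂) t * deriv γ₁ t| / ((deriv γ₁ t)^2 + (deriv γ₂ t)^2) ^ ((3:ℝ)/2))) := by
  have hN : 0 < deriv γ₁ t ^ 2 + deriv γ₂ t ^ 2 :=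
    sq_add_sq_pos_of_not_all_zero (hreg t ht) ((hω t).symm.trans h0)
  have hconst : ∀ L, k L t = |deriv (deriv γ₁) t * deriv γ₂ t - deriv (deriv γ₂) t * deriv γ₁ t| /
      (deriv γ₁ t ^ 2 + deriv γ₂ t ^ 2) ^ ((3 : ℝ) / 2) := fun L => by
    rw [hk, h0, h1]
    exact svkCurvature_horizontal L hN
  exact ⟨fun L _ => hconst L, by simp only [hconst]; exact tendsto_const_nhds⟩
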